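/- arXiv:2208.14198 — 4 statements merged into one kernel-verified Lean document; each statement's English description precedes it below -/
import Mathlib

section
/- Let A be the infinitesimal generator of a C₀-semigroup (T(t))_{t≥0} on a complex Banach space X satisfying ‖T(t)‖ ≤ M for all t ≥ 0, where M ≥ 1, and suppose there exists a constant C > 0 such that ‖R(r+is,A)‖ ≤ C/|s| for all r > 0 and all real s ≠ 0. Then the open sector Σ_{π/2+δ} with δ = arctan(1/C) is contained in the resolvent set ρ(A), and for every q ∈ (0,1) and every λ ∈ ℂ with |arg λ| ≤ π/2 + arctan(q/C) one has ‖λ R(λ,A)‖ ≤ √(C² + M²)/(1−q). -/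
/-!
For `Re λ > 0` the Laplace transform `∫₀^∞ e^{-λt} T(t) dt` inverts `λ - A` and has norm at most
`M / Re λ`. Write `λ = -a + is` with `a ≥ 0`: then `|arg λ| < π/2 + arctan (1/C)` says `aC < |s|`,
and `|arg λ| ≤ π/2 + arctan (q/C)` says `aC ≤ q|s|`. As `λ` is at distance `ε + a` from `ε + is`,
where `‖R‖ ≤ C/|s|`, the Neumann series gives `R(λ,A)` with `‖R(λ,A)‖ ≤ C/(|s| - (ε + a)C)`; let
`ε → 0`. Then `|Im λ| (1 - q) ‖R(λ,A)‖ ≤ C` and `|Re λ| (1 - q) ‖R(λ,A)‖ ≤ q ≤ M`, which bound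
`(1 - q) ‖λ R(λ,A)‖` by `√(C² + M²)`.
-/

open Filter Topology

universe u

/-- A strongly continuous one-parameter semigroup of bounded operators on a complex
Banach space: `T 0 = I`, `T (s+t) = T s ∘ T t` for nonnegative times, and
`T t x → x` as `t ↓ 0`. -/
def IsC0Semigroup {X : Type u} [NormedAddCommGroup X] [NormedSpace ℂ X]
    (T : ℝ → X →L[ℂ] X) : Prop :=
  T 0 = 1 ∧ (∀ s t : ℝ, 0 ≤ s → 0 ≤ t → T (s + t) = (T s).comp (T t)) ∧
    ∀ x : X, Tendsto (fun t => T t x) (nhdsWithin 0 (Set.Ioi 0)) (nhds x)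

/-- `A` (with domain `dom`) is the infinitesimal generator of the semigroup `T`:
`dom` is exactly the set of `x` for which `(T h x - x)/h` converges as `h ↓ 0`,
and for `x ∈ dom` the limit is `A x`. -/
def IsGenerator {X : Type u} [NormedAddCommGroup X] [NormedSpace ℂ X]
    (T : ℝ → X →L[ℂ] X) (dom : Set X) (A : X → X) : Prop :=
  (∀ x : X, x ∈ dom ↔ ∃ y : X,
      Tendsto (fun h : ℝ => (h : ℂ)⁻¹ • (T h x - x)) (nhdsWithin 0 (Set.Ioi 0)) (nhds y)) ∧
    ∀ x ∈ dom,
      Tendsto (fun h : ℝ => (h : ℂ)⁻¹ • (T h x - x)) (nhdsWithin 0 (Set.Ioi 0)) (nhds (A x))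

/-- `R` is the resolvent of the (unbounded) operator `A` with domain `dom`
at the point `lam`, i.e. the (bounded) two-sided inverse of `lam - A`. -/
def IsResolventAt {X : Type u} [NormedAddCommGroup X] [NormedSpace ℂ X]
    (dom : Set X) (A : X → X) (lam : ℂ) (R : X →L[ℂ] X) : Prop :=
  (∀ y : X, R y ∈ dom) ∧ (∀ y : X, lam • R y - A (R y) = y) ∧
    ∀ x ∈ dom, R (lam • x - A x) = x

open MeasureTheory Set

namespace IsResolventAt

variable {X : Type u} [NormedAddCommGroup X] [NormedSpace ℂ X] {dom : Set X} {A : X → X}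
  {lam : ℂ} {R : X →L[ℂ] X}

theorem unique {R' : X →L[ℂ] X} (hR : IsResolventAt dom A lam R)
    (hR' : IsResolventAt dom A lam R') : R = R' := by
  ext y
  simpa only [hR'.2.1 y] using hR.2.2 (R' y) (hR'.1 y)

/-- Neumann series: `R(μ) = R(λ) (1 - (λ - μ) R(λ))⁻¹`. -/
theorem exists_of_norm_sub_mul_lt_one [CompleteSpace X] (hR : IsResolventAt dom A lam R)
    {μ : ℂ} {K : ℝ} (hRK : ‖R‖ ≤ K) (hK : ‖lam - μ‖ * K < 1) :
    ∃ R' : X →L[ℂ] X, IsResolventAt dom A μ R' ∧ ‖R'‖ ≤ K / (1 - ‖lam - μ‖ * K) := by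
  set S : X →L[ℂ] X := (lam - μ) • R
  have hSK : ‖S‖ ≤ ‖lam - μ‖ * K := (norm_smul_le (lam - μ) R).trans (by gcongr)
  have hS : ‖S‖ < 1 := hSK.trans_lt hK
  set u := Units.oneSub S hS
  have hu : (u : X →L[ℂ] X) = 1 - S := Units.val_oneSub S hS
  set v : X →L[ℂ] X := ↑u⁻¹
  have hRv : Commute R v := by
    refine Commute.units_inv_right ?_
    rw [hu]
    exact (Commute.one_right R).sub_right ((Commute.refl R).smul_right _)
  have hcomp_R : ∀ y, μ • R y - A (R y) = (u : X →L[ℂ] X) y := fun y => by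
    rw [hu]
    change _ = y - (lam - μ) • R y
    linear_combination (norm := module) hR.2.1 y
  have hR_comp : ∀ x ∈ dom, R (μ • x - A x) = (u : X →L[ℂ] X) x := fun x hx => by
    rw [hu, show μ • x - A x = (lam • x - A x) - (lam - μ) • x by module, map_sub, map_smul,
      hR.2.2 x hx]
    rfl
  have hv : ‖v‖ ≤ (1 - ‖S‖)⁻¹ := by
    have h1 : ‖(1 : X →L[ℂ] X)‖ ≤ 1 := ContinuousLinearMap.norm_id_le
    have h2 : ‖v‖ ≤ ‖(1 : X →L[ℂ] X)‖ - 1 + (1 - ‖S‖)⁻¹ :=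
      tsum_geometric_le_of_norm_lt_one S hS
    linarith
  refine ⟨R * v, ⟨fun y => hR.1 _, fun y => ?_, fun x hx => ?_⟩, ?_⟩
  · change μ • R (v y) - A (R (v y)) = y
    rw [hcomp_R, ← mul_apply_eq_comp, u.mul_inv]
    rfl
  · rw [hRv.eq, mul_apply_eq_comp, hR_comp x hx, ← mul_apply_eq_comp, u.inv_mul]
    rfl
  · have hK0 : 0 ≤ K := (norm_nonneg R).trans hRK
    calc ‖R * v‖ ≤ K * (1 - ‖S‖)⁻¹ :=
          (norm_mul_le _ _).trans (mul_le_mul hRK hv (norm_nonneg _) hK0)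
      _ ≤ K / (1 - ‖lam - μ‖ * K) := by
          rw [div_eq_mul_inv]
          gcongr

end IsResolventAt

namespace IsC0Semigroup

variable {X : Type u} [NormedAddCommGroup X] [NormedSpace ℂ X] {T : ℝ → X →L[ℂ] X} {M : ℝ}

theorem apply_add (hT : IsC0Semigroup T) {s t : ℝ} (hs : 0 ≤ s) (ht : 0 ≤ t) (x : X) :
    T (s + t) x = T s (T t x) := by
  rw [hT.2.1 s t hs ht]
  rfl

theorem apply_comm (hT : IsC0Semigroup T) {s t : ℝ} (hs : 0 ≤ s) (ht : 0 ≤ t) (x : X) :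
    T s (T t x) = T t (T s x) := by
  rw [← hT.apply_add hs ht, add_comm, hT.apply_add ht hs]

theorem tendsto_nhdsGE_zero (hT : IsC0Semigroup T) (x : X) :
    Tendsto (fun t => T t x) (𝓝[≥] 0) (𝓝 x) := by
  have h : ContinuousWithinAt (fun t => T t x) (Ioi 0) 0 := by
    simpa [ContinuousWithinAt, hT.1] using hT.2.2 x
  simpa [ContinuousWithinAt, hT.1] using continuousWithinAt_Ioi_iff_Ici.1 h

theorem norm_apply_sub_apply_le (hT : IsC0Semigroup T) (hTM : ∀ t, 0 ≤ t → ‖T t‖ ≤ M) (x : X)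
    {s t : ℝ} (hs : 0 ≤ s) (hst : s ≤ t) : ‖T t x - T s x‖ ≤ M * ‖T (t - s) x - x‖ := by
  calc ‖T t x - T s x‖ = ‖T s (T (t - s) x - x)‖ := by
        rw [map_sub, ← hT.apply_add hs (sub_nonneg.2 hst), add_sub_cancel]
    _ ≤ M * ‖T (t - s) x - x‖ := (T s).le_of_opNorm_le (hTM s hs) _

theorem continuousOn (hT : IsC0Semigroup T) (hTM : ∀ t, 0 ≤ t → ‖T t‖ ≤ M) (x : X) :
    ContinuousOn (fun t => T t x) (Ici 0) := by
  intro t₀ ht₀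
  have hdist : Tendsto (fun t => |t - t₀|) (𝓝 t₀) (𝓝[≥] 0) :=
    tendsto_nhdsWithin_iff.2 ⟨by simpa using ((continuous_sub_right t₀).abs.tendsto t₀),
      Eventually.of_forall fun t => mem_Ici.2 (abs_nonneg _)⟩
  have hbound : Tendsto (fun t => M * ‖T |t - t₀| x - x‖) (𝓝 t₀) (𝓝 0) := by
    simpa using (((hT.tendsto_nhdsGE_zero x).comp hdist).sub_const x).norm.const_mul M
  refine tendsto_iff_norm_sub_tendsto_zero.2 <| squeeze_zero'
    (Eventually.of_forall fun _ => norm_nonneg _) ?_ (hbound.mono_left nhdsWithin_le_nhds)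
  filter_upwards [self_mem_nhdsWithin] with t (ht : 0 ≤ t)
  rcases le_total t₀ t with h | h
  · rw [abs_of_nonneg (sub_nonneg.2 h)]
    exact hT.norm_apply_sub_apply_le hTM x ht₀ h
  · rw [norm_sub_rev, abs_sub_comm, abs_of_nonneg (sub_nonneg.2 h)]
    exact hT.norm_apply_sub_apply_le hTM x ht h

end IsC0Semigroup

theorem MeasureTheory.integral_Ioi_comp_add_right {E : Type*} [NormedAddCommGroup E]
    [NormedSpace ℝ E] (f : ℝ → E) (a d : ℝ) :
    ∫ t in Ioi a, f (t + d) = ∫ t in Ioi (a + d), f t := by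
  have h := (measurePreserving_add_right volume d).setIntegral_preimage_emb
    (MeasurableEquiv.addRight d).measurableEmbedding f (Ioi (a + d))
  rwa [preimage_add_const_Ioi, add_sub_cancel_right] at h

noncomputable def laplaceIntegral {X : Type u} [NormedAddCommGroup X] [NormedSpace ℂ X]
    (T : ℝ → X →L[ℂ] X) (lam : ℂ) (x : X) : X :=
  ∫ t in Ioi (0 : ℝ), Complex.exp (-lam * t) • T t x

namespace IsC0Semigroup

variable {X : Type u} [NormedAddCommGroup X] [NormedSpace ℂ X] {T : ℝ → X →L[ℂ] X} {M : ℝ}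
  {lam : ℂ}

theorem norm_exp_smul_apply_le (hTM : ∀ t, 0 ≤ t → ‖T t‖ ≤ M) {t : ℝ} (ht : 0 ≤ t) (x : X) :
    ‖Complex.exp (-lam * t) • T t x‖ ≤ M * ‖x‖ * Real.exp (-lam.re * t) := by
  rw [norm_smul, Complex.norm_exp, mul_comm]
  simp only [Complex.mul_re, Complex.neg_re, Complex.neg_im, Complex.ofReal_re,
    Complex.ofReal_im, mul_zero, sub_zero]
  gcongr
  exact (T t).le_of_opNorm_le (hTM t ht) x

theorem continuousOn_exp_smul_apply (hT : IsC0Semigroup T) (hTM : ∀ t, 0 ≤ t → ‖T t‖ ≤ M)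
    (x : X) : ContinuousOn (fun t : ℝ => Complex.exp (-lam * t) • T t x) (Ici 0) :=
  (by fun_prop : Continuous fun t : ℝ => Complex.exp (-lam * t)).continuousOn.smul
    (hT.continuousOn hTM x)

theorem integrableOn_exp_smul_apply (hT : IsC0Semigroup T) (hTM : ∀ t, 0 ≤ t → ‖T t‖ ≤ M)
    (hre : 0 < lam.re) (x : X) :
    IntegrableOn (fun t : ℝ => Complex.exp (-lam * t) • T t x) (Ioi 0) := by
  refine ((integrableOn_exp_mul_Ioi (neg_neg_of_pos hre) 0).const_mul (M * ‖x‖)).mono' ?_ ?_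
  · exact ((hT.continuousOn_exp_smul_apply hTM x).mono Ioi_subset_Ici_self).aestronglyMeasurable
      measurableSet_Ioi
  · exact (ae_restrict_iff' measurableSet_Ioi).2 <|
      ae_of_all _ fun t ht => norm_exp_smul_apply_le hTM (le_of_lt ht) x

theorem norm_laplaceIntegral_le (hTM : ∀ t, 0 ≤ t → ‖T t‖ ≤ M)
    (hre : 0 < lam.re) (x : X) : ‖laplaceIntegral T lam x‖ ≤ M / lam.re * ‖x‖ := by
  have hexp := integrableOn_exp_mul_Ioi (neg_neg_of_pos hre) 0
  calc ‖laplaceIntegral T lam x‖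
      ≤ ∫ t in Ioi 0, M * ‖x‖ * Real.exp (-lam.re * t) :=
        norm_integral_le_of_norm_le (hexp.const_mul _) <| (ae_restrict_iff' measurableSet_Ioi).2 <|
          ae_of_all _ fun t ht => norm_exp_smul_apply_le hTM (le_of_lt ht) x
    _ = M / lam.re * ‖x‖ := by
        rw [integral_const_mul, integral_exp_mul_Ioi (neg_neg_of_pos hre)]
        field_simp
        simp

theorem laplaceIntegral_add (hT : IsC0Semigroup T) (hTM : ∀ t, 0 ≤ t → ‖T t‖ ≤ M)
    (hre : 0 < lam.re) (x y : X) :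
    laplaceIntegral T lam (x + y) = laplaceIntegral T lam x + laplaceIntegral T lam y := by
  rw [laplaceIntegral, laplaceIntegral, laplaceIntegral, ← integral_add
    (hT.integrableOn_exp_smul_apply hTM hre x) (hT.integrableOn_exp_smul_apply hTM hre y)]
  simp only [map_add, smul_add]

theorem laplaceIntegral_smul (c : ℂ) (x : X) :
    laplaceIntegral T lam (c • x) = c • laplaceIntegral T lam x := by
  rw [laplaceIntegral, laplaceIntegral, ← integral_smul]
  simp only [map_smul, smul_comm c]

variable [CompleteSpace X]

theorem laplaceIntegral_apply_comm (hT : IsC0Semigroup T) (hTM : ∀ t, 0 ≤ t → ‖T t‖ ≤ M)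
    (hre : 0 < lam.re) {h : ℝ} (hh : 0 ≤ h) (x : X) :
    laplaceIntegral T lam (T h x) = T h (laplaceIntegral T lam x) := by
  rw [laplaceIntegral, laplaceIntegral,
    ← (T h).integral_comp_comm (hT.integrableOn_exp_smul_apply hTM hre x)]
  refine setIntegral_congr_fun measurableSet_Ioi fun t ht => ?_
  simp only [map_smul, hT.apply_comm (le_of_lt ht) hh]

theorem apply_laplaceIntegral (hT : IsC0Semigroup T) (hTM : ∀ t, 0 ≤ t → ‖T t‖ ≤ M)
    (hre : 0 < lam.re) {h : ℝ} (hh : 0 ≤ h) (x : X) :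
    T h (laplaceIntegral T lam x) = Complex.exp (lam * h) •
      (laplaceIntegral T lam x - ∫ t in (0)..h, Complex.exp (-lam * t) • T t x) := by
  have hint := hT.integrableOn_exp_smul_apply hTM hre x
  rw [laplaceIntegral, ← intervalIntegral.integral_Ioi_sub_Ioi hint hh, sub_sub_cancel,
    ← (T h).integral_comp_comm hint, ← integral_smul, ← zero_add h,
    ← integral_Ioi_comp_add_right, zero_add]
  refine setIntegral_congr_fun measurableSet_Ioi fun t ht => ?_
  rw [map_smul, ← hT.apply_add hh (le_of_lt ht), smul_smul, ← Complex.exp_add, add_comm h]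
  congr 2
  push_cast
  ring

theorem tendsto_laplaceIntegral (hT : IsC0Semigroup T) (hTM : ∀ t, 0 ≤ t → ‖T t‖ ≤ M)
    (hre : 0 < lam.re) (x : X) :
    Tendsto (fun h : ℝ => (h : ℂ)⁻¹ • (T h (laplaceIntegral T lam x) - laplaceIntegral T lam x))
      (𝓝[>] 0) (𝓝 (lam • laplaceIntegral T lam x - x)) := by
  set f := fun t : ℝ => Complex.exp (-lam * t) • T t x
  have hf := hT.continuousOn_exp_smul_apply hTM (lam := lam) x
  have hF : HasDerivWithinAt (fun h => ∫ t in (0)..h, f t) x (Ici 0) 0 := by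
    simpa [f, hT.1] using intervalIntegral.integral_hasDerivWithinAt_right
      IntervalIntegrable.refl ((hf.mono Ioi_subset_Ici_self).stronglyMeasurableAtFilter_nhdsWithin
        measurableSet_Ioi 0) ((hf 0 (mem_Ici.2 le_rfl)).mono Ioi_subset_Ici_self)
  have hexp : HasDerivWithinAt (fun h : ℝ => Complex.exp (lam * h)) lam (Ici 0) 0 := by
    simpa using (((hasDerivAt_id (0 : ℝ)).ofReal_comp.const_mul lam).cexp).hasDerivWithinAt
  have hg : HasDerivWithinAt (fun h : ℝ => Complex.exp (lam * h) •
      (laplaceIntegral T lam x - ∫ t in (0)..h, f t))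
      (lam • laplaceIntegral T lam x - x) (Ioi 0) 0 :=
    ((hexp.smul (hF.const_sub _)).mono Ioi_subset_Ici_self).congr_deriv (by simp [neg_add_eq_sub])
  refine ((hasDerivWithinAt_iff_tendsto_slope' (lt_irrefl _)).1 hg).congr' ?_
  filter_upwards [self_mem_nhdsWithin] with h (hh : 0 < h)
  rw [slope_def_module, hT.apply_laplaceIntegral hTM hre hh.le, sub_zero, ← Complex.coe_smul,
    Complex.ofReal_inv]
  simp [f]

theorem exists_isResolventAt_of_re_pos (hT : IsC0Semigroup T) (hTM : ∀ t, 0 ≤ t → ‖T t‖ ≤ M)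
    {dom : Set X} {A : X → X} (hA : IsGenerator T dom A) (hre : 0 < lam.re) :
    ∃ R : X →L[ℂ] X, IsResolventAt dom A lam R ∧ ‖R‖ ≤ M / lam.re := by
  set L : X →L[ℂ] X := LinearMap.mkContinuous
    ⟨⟨laplaceIntegral T lam, hT.laplaceIntegral_add hTM hre⟩, laplaceIntegral_smul⟩
    (M / lam.re) (norm_laplaceIntegral_le hTM hre)
  have hL : ∀ x, L x = laplaceIntegral T lam x := fun _ => rfl
  have hgen : ∀ x, L x ∈ dom ∧ A (L x) = lam • L x - x := fun x => by
    have h := hT.tendsto_laplaceIntegral hTM hre x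
    have hmem : L x ∈ dom := (hA.1 _).2 ⟨_, h⟩
    exact ⟨hmem, tendsto_nhds_unique (hA.2 _ hmem) h⟩
  have hcomm : ∀ x ∈ dom, L (A x) = A (L x) := fun x hx => by
    refine tendsto_nhds_unique ((L.continuous.tendsto _).comp (hA.2 x hx)) ?_
    refine (hA.2 _ (hgen x).1).congr' ?_
    filter_upwards [self_mem_nhdsWithin] with h (hh : 0 < h)
    rw [Function.comp_apply, map_smul, map_sub]
    simp only [hL, hT.laplaceIntegral_apply_comm hTM hre hh.le]
  refine ⟨L, ⟨fun y => (hgen y).1, fun y => ?_, fun x hx => ?_⟩, ?_⟩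
  · rw [(hgen y).2]
    abel
  · rw [map_sub, map_smul, hcomm x hx, (hgen x).2]
    abel
  · exact LinearMap.mkContinuous_norm_le _
      (div_nonneg ((norm_nonneg _).trans (hTM 0 le_rfl)) hre.le) _

end IsC0Semigroup

theorem exists_isResolventAt_of_re_nonpos {X : Type u} [NormedAddCommGroup X] [NormedSpace ℂ X]
    [CompleteSpace X] {dom : Set X} {A : X → X} {C : ℝ} (hC : 0 < C)
    (hright : ∀ r s : ℝ, 0 < r → ∃ R : X →L[ℂ] X,
      IsResolventAt dom A ((r : ℂ) + (s : ℂ) * Complex.I) R)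
    (hres : ∀ r s : ℝ, 0 < r → s ≠ 0 → ∀ R : X →L[ℂ] X,
      IsResolventAt dom A ((r : ℂ) + (s : ℂ) * Complex.I) R → ‖R‖ ≤ C / |s|)
    {lam : ℂ} (hre : lam.re ≤ 0) (hlam : -lam.re * C < |lam.im|) :
    ∃ R : X →L[ℂ] X, IsResolventAt dom A lam R ∧ ‖R‖ ≤ C / (|lam.im| + lam.re * C) := by
  have hs : 0 < |lam.im| := by nlinarith
  have hperturb : ∀ ε : ℝ, 0 < ε → ε * C < |lam.im| + lam.re * C → ∃ R : X →L[ℂ] X,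
      IsResolventAt dom A lam R ∧ ‖R‖ ≤ C / (|lam.im| + (lam.re - ε) * C) := by
    intro ε hε hεC
    obtain ⟨R₀, hR₀⟩ := hright ε lam.im hε
    have hdist : ‖((ε : ℂ) + lam.im * Complex.I) - lam‖ = ε - lam.re := by
      rw [show ((ε : ℂ) + lam.im * Complex.I) - lam = ((ε - lam.re : ℝ) : ℂ) by
        apply Complex.ext <;> simp, Complex.norm_real, Real.norm_of_nonneg (by linarith)]
    obtain ⟨R, hR, hRnorm⟩ := hR₀.exists_of_norm_sub_mul_lt_one
      (hres ε lam.im hε (abs_pos.1 hs) R₀ hR₀)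
      (by rw [hdist, mul_div_assoc', div_lt_one hs]; linarith)
    refine ⟨R, hR, hRnorm.trans_eq ?_⟩
    rw [hdist]
    field_simp
    ring
  have hε₀ : 0 < (|lam.im| + lam.re * C) / C := div_pos (by linarith) hC
  have hev : ∀ᶠ ε in 𝓝[>] 0, ∃ R : X →L[ℂ] X,
      IsResolventAt dom A lam R ∧ ‖R‖ ≤ C / (|lam.im| + (lam.re - ε) * C) := by
    filter_upwards [Ioo_mem_nhdsGT hε₀] with ε hε
    exact hperturb ε hε.1 ((lt_div_iff₀ hC).1 hε.2)
  obtain ⟨-, R, hR, -⟩ := hev.exists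
  refine ⟨R, hR, ge_of_tendsto ?_ (hev.mono fun ε ⟨R', hR', hR'norm⟩ => hR.unique hR' ▸ hR'norm)⟩
  have hcont : ContinuousAt (fun ε : ℝ => C / (|lam.im| + (lam.re - ε) * C)) 0 :=
    continuousAt_const.div (by fun_prop) (by linarith)
  simpa using hcont.tendsto.mono_left nhdsWithin_le_nhds

namespace Complex

theorem abs_arg_eq_pi_div_two_add_arctan {z : ℂ} (h : z.im ≠ 0) :
    |arg z| = Real.pi / 2 + Real.arctan (-z.re / |z.im|) := by
  have hz : z ≠ 0 := fun hz => h (by simp [hz])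
  have hnorm : 0 < ‖z‖ := norm_pos_iff.2 hz
  have harccos : |arg z| = Real.arccos (z.re / ‖z‖) := by
    rcases le_or_gt 0 z.im with him | him
    · rw [arg_of_im_nonneg_of_ne_zero him hz, abs_of_nonneg (Real.arccos_nonneg _)]
    · rw [arg_of_im_neg him, abs_neg, abs_of_nonneg (Real.arccos_nonneg _)]
  have hmem : z.re / ‖z‖ ∈ Ioo (-1) 1 := by
    rw [mem_Ioo, ← abs_lt, abs_div, abs_norm, div_lt_one hnorm]
    exact abs_re_lt_norm.2 h
  have hsqrt : √(1 - (z.re / ‖z‖) ^ 2) = |z.im| / ‖z‖ := by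
    have hn : ‖z‖ ^ 2 = z.re ^ 2 + z.im ^ 2 := by
      rw [Complex.sq_norm, normSq_apply]
      ring
    have h1 : 1 - (z.re / ‖z‖) ^ 2 = (z.im / ‖z‖) ^ 2 := by
      rw [div_pow, div_pow, eq_div_iff (by positivity), sub_mul, div_mul_cancel₀ _ (by positivity)]
      linarith
    rw [h1, Real.sqrt_sq_eq_abs, abs_div, abs_norm]
  rw [harccos, Real.arccos_eq_pi_div_two_sub_arcsin, Real.arcsin_eq_arctan hmem, hsqrt,
    div_div_div_cancel_right₀ hnorm.ne', neg_div, Real.arctan_neg, sub_eq_add_neg]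

theorem im_ne_zero_of_abs_arg_lt_pi {z : ℂ} (hz : z ≠ 0) (hre : z.re ≤ 0) (h : |arg z| < Real.pi) :
    z.im ≠ 0 := by
  intro him
  have hre' : z.re < 0 := hre.lt_of_ne fun h0 => hz (Complex.ext h0 him)
  rw [arg_eq_pi_iff.2 ⟨hre', him⟩, abs_of_pos Real.pi_pos] at h
  exact h.false

theorem neg_re_lt_mul_abs_im_of_abs_arg_lt {z : ℂ} {t : ℝ} (hz : z ≠ 0) (hre : z.re ≤ 0)
    (h : |arg z| < Real.pi / 2 + Real.arctan t) : -z.re < t * |z.im| := by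
  have him := im_ne_zero_of_abs_arg_lt_pi hz hre
    (h.trans (by linarith [Real.arctan_lt_pi_div_two t]))
  rw [abs_arg_eq_pi_div_two_add_arctan him, add_lt_add_iff_left,
    Real.arctan_strictMono.lt_iff_lt, div_lt_iff₀ (abs_pos.2 him)] at h
  exact h

theorem neg_re_le_mul_abs_im_of_abs_arg_le {z : ℂ} {t : ℝ} (hz : z ≠ 0) (hre : z.re ≤ 0)
    (h : |arg z| ≤ Real.pi / 2 + Real.arctan t) : -z.re ≤ t * |z.im| := by
  have him := im_ne_zero_of_abs_arg_lt_pi hz hre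
    (h.trans_lt (by linarith [Real.arctan_lt_pi_div_two t]))
  rw [abs_arg_eq_pi_div_two_add_arctan him, add_le_add_iff_left,
    Real.arctan_strictMono.le_iff_le, div_le_iff₀ (abs_pos.2 him)] at h
  exact h

theorem norm_mul_le_sqrt {z : ℂ} {r a b : ℝ} (hr : 0 ≤ r) (him : |z.im| * r ≤ a)
    (hre : |z.re| * r ≤ b) : ‖z‖ * r ≤ √(a ^ 2 + b ^ 2) := by
  have hsq : (‖z‖ * r) ^ 2 = (|z.im| * r) ^ 2 + (|z.re| * r) ^ 2 := by
    rw [mul_pow, Complex.sq_norm, normSq_apply, mul_pow, mul_pow, sq_abs, sq_abs]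
    ring
  rw [← Real.sqrt_sq (by positivity : 0 ≤ ‖z‖ * r), hsq]
  gcongr

end Complex

theorem abs_im_mul_norm_le_of_re_pos {X : Type u} [NormedAddCommGroup X] [NormedSpace ℂ X]
    {dom : Set X} {A : X → X} {C : ℝ} (hC : 0 ≤ C)
    (hres : ∀ r s : ℝ, 0 < r → s ≠ 0 → ∀ R : X →L[ℂ] X,
      IsResolventAt dom A ((r : ℂ) + (s : ℂ) * Complex.I) R → ‖R‖ ≤ C / |s|)
    {lam : ℂ} {R : X →L[ℂ] X} (hre : 0 < lam.re) (hR : IsResolventAt dom A lam R) :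
    |lam.im| * ‖R‖ ≤ C := by
  rcases eq_or_ne lam.im 0 with him | him
  · simpa [him] using hC
  · rw [← le_div_iff₀' (abs_pos.2 him)]
    exact hres _ _ hre him R (by rwa [Complex.re_add_im])

theorem norm_smul_le_sqrt_of_re_pos {E : Type*} [NormedAddCommGroup E] [NormedSpace ℂ E]
    {lam : ℂ} {x : E} {C M : ℝ} (hre : 0 < lam.re) (hM : ‖x‖ ≤ M / lam.re)
    (hC : |lam.im| * ‖x‖ ≤ C) : ‖lam • x‖ ≤ √(C ^ 2 + M ^ 2) := by
  rw [norm_smul]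
  refine Complex.norm_mul_le_sqrt (norm_nonneg x) hC ?_
  rw [abs_of_pos hre]
  exact (le_div_iff₀' hre).1 hM

theorem norm_smul_le_sqrt_of_re_nonpos {E : Type*} [NormedAddCommGroup E] [NormedSpace ℂ E]
    {lam : ℂ} {x : E} {C q : ℝ} (hC : 0 < C) (hq0 : 0 ≤ q) (hq1 : q < 1) (hre : lam.re ≤ 0)
    (hlam : -lam.re * C ≤ q * |lam.im|) (hx : ‖x‖ ≤ C / (|lam.im| + lam.re * C)) :
    ‖lam • x‖ ≤ √(C ^ 2 + q ^ 2) / (1 - q) := by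
  have hq : 0 < 1 - q := sub_pos.2 hq1
  have hxC : ‖x‖ * (|lam.im| + lam.re * C) ≤ C :=
    mul_le_of_le_div₀ hC.le (by nlinarith [abs_nonneg lam.im]) hx
  have him : |lam.im| * ((1 - q) * ‖x‖) ≤ C := by
    nlinarith [mul_le_mul_of_nonneg_left hlam (norm_nonneg x)]
  have hre' : |lam.re| * ((1 - q) * ‖x‖) ≤ q := by
    rw [abs_of_nonpos hre]
    nlinarith [mul_le_mul_of_nonneg_left hlam (mul_nonneg hq.le (norm_nonneg x))]
  rw [norm_smul, le_div_iff₀ hq]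
  linear_combination Complex.norm_mul_le_sqrt (by positivity) him hre'

/-- Quantitative version of the classical resolvent-sector lemma:
if `A` generates a bounded `C₀`-semigroup with `‖T t‖ ≤ M` and
`‖R(r + is, A)‖ ≤ C/|s|` for `r > 0`, `s ≠ 0`, then the open sector of angle
`π/2 + arctan (1/C)` lies in the resolvent set of `A`, and for every `q ∈ (0,1)`
and `λ` with `|arg λ| ≤ π/2 + arctan (q/C)` one has
`‖λ R(λ,A)‖ ≤ √(C² + M²)/(1 - q)`. -/
theorem stmt0 {X : Type u} [NormedAddCommGroup X] [NormedSpace ℂ X] [CompleteSpace X]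
    (T : ℝ → X →L[ℂ] X) (hT : IsC0Semigroup T)
    (M : ℝ) (hM : 1 ≤ M) (hTM : ∀ t : ℝ, 0 ≤ t → ‖T t‖ ≤ M)
    (dom : Set X) (A : X → X) (hA : IsGenerator T dom A)
    (C : ℝ) (hC : 0 < C)
    (hres : ∀ r s : ℝ, 0 < r → s ≠ 0 → ∀ R : X →L[ℂ] X,
      IsResolventAt dom A ((r : ℂ) + (s : ℂ) * Complex.I) R → ‖R‖ ≤ C / |s|) :
    (∀ lam : ℂ, lam ≠ 0 → |lam.arg| < Real.pi / 2 + Real.arctan (1 / C) →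
      ∃ R : X →L[ℂ] X, IsResolventAt dom A lam R) ∧
    ∀ q : ℝ, q ∈ Set.Ioo (0 : ℝ) 1 → ∀ lam : ℂ, lam ≠ 0 →
      |lam.arg| ≤ Real.pi / 2 + Real.arctan (q / C) →
      ∀ R : X →L[ℂ] X, IsResolventAt dom A lam R →
        ‖lam • R‖ ≤ Real.sqrt (C ^ 2 + M ^ 2) / (1 - q) := by
  have hright : ∀ lam : ℂ, 0 < lam.re →
      ∃ R : X →L[ℂ] X, IsResolventAt dom A lam R ∧ ‖R‖ ≤ M / lam.re :=
    fun lam => hT.exists_isResolventAt_of_re_pos hTM hA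
  have hleft : ∀ lam : ℂ, lam.re ≤ 0 → -lam.re * C < |lam.im| →
      ∃ R : X →L[ℂ] X, IsResolventAt dom A lam R ∧ ‖R‖ ≤ C / (|lam.im| + lam.re * C) :=
    fun lam => exists_isResolventAt_of_re_nonpos hC
      (fun r s hr => (hright _ (by simpa using hr)).imp fun _ => And.left) hres
  have hsector : ∀ lam : ℂ, lam ≠ 0 → lam.re ≤ 0 →
      |lam.arg| < Real.pi / 2 + Real.arctan (1 / C) → -lam.re * C < |lam.im| := by
    intro lam hlam hre harg
    have h := Complex.neg_re_lt_mul_abs_im_of_abs_arg_lt hlam hre harg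
    rwa [one_div_mul_eq_div, lt_div_iff₀ hC] at h
  refine ⟨fun lam hlam harg => ?_, fun q ⟨hq0, hq1⟩ lam hlam harg R hR => ?_⟩
  · rcases lt_or_ge 0 lam.re with hre | hre
    · exact (hright lam hre).imp fun _ => And.left
    · exact (hleft lam hre (hsector lam hlam hre harg)).imp fun _ => And.left
  rcases lt_or_ge 0 lam.re with hre | hre
  · obtain ⟨R', hR', hR'M⟩ := hright lam hre
    rw [hR.unique hR']
    exact (norm_smul_le_sqrt_of_re_pos hre hR'M
      (abs_im_mul_norm_le_of_re_pos hC.le hres hre hR')).trans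
        (le_div_self (Real.sqrt_nonneg _) (by linarith) (by linarith))
  · have hqarg : -lam.re * C ≤ q * |lam.im| := by
      have h := Complex.neg_re_le_mul_abs_im_of_abs_arg_le hlam hre harg
      rwa [div_mul_eq_mul_div, le_div_iff₀ hC] at h
    obtain ⟨R', hR', hR'C⟩ := hleft lam hre (hsector lam hlam hre (harg.trans_lt (by gcongr)))
    rw [hR.unique hR']
    refine (norm_smul_le_sqrt_of_re_nonpos hC hq0.le hq1 hre hqarg hR'C).trans ?_
    gcongr
    linarith
end

section
/- Let q ∈ (1,∞) and δ ∈ (0,1]. If x ∈ [0,2] satisfies x^q + δ·2^q·(x−1)₊^q ≤ 2^q, where (x−1)₊ = max(x−1,0), then x ≤ 2 − ε, where ε := (2δ/(1+2δ))·(1/q) ∈ (0,1). -/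
/-- Elementary estimate: if `q ∈ (1,∞)`, `δ ∈ (0,1]` and `x ∈ [0,2]` satisfies
`x^q + δ 2^q (x-1)₊^q ≤ 2^q`, then `x ≤ 2 - ε` where
`ε = (2δ/(1+2δ)) · (1/q)`, and moreover `ε ∈ (0,1)`. -/
theorem stmt6 (q δ x : ℝ) (hq : 1 < q) (hδ : δ ∈ Set.Ioc (0 : ℝ) 1)
    (hx : x ∈ Set.Icc (0 : ℝ) 2)
    (h : x ^ q + δ * 2 ^ q * max (x - 1) 0 ^ q ≤ 2 ^ q) :
    x ≤ 2 - 2 * δ / (1 + 2 * δ) * (1 / q) ∧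
      2 * δ / (1 + 2 * δ) * (1 / q) ∈ Set.Ioo (0 : ℝ) 1 := by
  obtain ⟨hδ0, hδ1⟩ := hδ
  obtain ⟨hx0, hx2⟩ := hx
  have hq0 : (0 : ℝ) < q := by linarith
  set ε := 2 * δ / (1 + 2 * δ) * (1 / q) with hεdef
  have hd : (0 : ℝ) < 1 + 2 * δ := by linarith
  have hε0 : 0 < ε := by rw [hεdef]; positivity
  have hfrac : 2 * δ / (1 + 2 * δ) < 1 := (div_lt_one hd).2 (by linarith)
  have hq1 : 1 / q < 1 := by rw [div_lt_one hq0]; exact hq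
  have hε1 : ε < 1 := by
    calc ε ≤ 1 * (1 / q) := by
            rw [hεdef]; gcongr
      _ = 1 / q := one_mul _
      _ < 1 := hq1
  refine ⟨?_, hε0, hε1⟩
  by_contra hcon
  push_neg at hcon
  have hx1 : 1 < x := by linarith
  have hmax : max (x - 1) 0 = x - 1 := max_eq_left (by linarith)
  rw [hmax] at h
  have key : q * ε * (1 + 2 * δ) = 2 * δ := by
    rw [hεdef]; field_simp
  have h2q : (0 : ℝ) < 2 ^ q := Real.rpow_pos_of_pos (by norm_num) q
  have hB1 : 1 - q * (ε / 2) ≤ (1 - ε / 2) ^ q := by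
    have := one_add_mul_self_le_rpow_one_add (s := -(ε / 2)) (by linarith) hq.le
    simpa [sub_eq_add_neg, mul_neg] using this
  have hB2 : 1 - q * ε ≤ (1 - ε) ^ q := by
    have := one_add_mul_self_le_rpow_one_add (s := -ε) (by linarith) hq.le
    simpa [sub_eq_add_neg, mul_neg] using this
  have h2e : (2 - ε) ^ q = 2 ^ q * (1 - ε / 2) ^ q := by
    rw [← Real.mul_rpow (by norm_num) (by linarith)]
    congr 1; ring
  have hlt1 : (2 - ε) ^ q < x ^ q := Real.rpow_lt_rpow (by linarith) hcon hq0
  have hlt2 : (1 - ε) ^ q ≤ (x - 1) ^ q :=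
    Real.rpow_le_rpow (by linarith) (by linarith) hq0.le
  have t1 : 2 ^ q * (1 - q * (ε / 2)) ≤ 2 ^ q * (1 - ε / 2) ^ q :=
    mul_le_mul_of_nonneg_left hB1 h2q.le
  have hδ2q : (0 : ℝ) < δ * 2 ^ q := mul_pos hδ0 h2q
  have t2 : δ * 2 ^ q * (1 - q * ε) ≤ δ * 2 ^ q * (1 - ε) ^ q :=
    mul_le_mul_of_nonneg_left hB2 hδ2q.le
  have t4 : δ * 2 ^ q * (1 - ε) ^ q ≤ δ * 2 ^ q * (x - 1) ^ q :=
    mul_le_mul_of_nonneg_left hlt2 hδ2q.le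
  have base : (2 : ℝ) ^ q = 2 ^ q * (1 - q * (ε / 2)) + δ * 2 ^ q * (1 - q * ε) := by
    linear_combination (2:ℝ) ^ q / 2 * key
  have final : (2 : ℝ) ^ q < 2 ^ q := by
    calc (2 : ℝ) ^ q = 2 ^ q * (1 - q * (ε / 2)) + δ * 2 ^ q * (1 - q * ε) := base
      _ ≤ 2 ^ q * (1 - ε / 2) ^ q + δ * 2 ^ q * (1 - ε) ^ q := by linarith
      _ < x ^ q + δ * 2 ^ q * (x - 1) ^ q := by
          have := h2e ▸ hlt1
          linarith
      _ ≤ 2 ^ q := h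
  exact absurd final (lt_irrefl _)
end

section
/- Let 2 ≤ q < ∞ and let (X,‖·‖) be a Banach space which is uniformly convex of power type q with constant δ ∈ (0,1], and let (Ω,μ) be a measure space. Then the Bochner space L_q(Ω;X) is uniformly convex of power type q with the same constant δ, i.e., ‖(f+g)/2‖_{L_q(Ω;X)}^q + δ‖(f−g)/2‖_{L_q(Ω;X)}^q ≤ (‖f‖_{L_q(Ω;X)}^q + ‖g‖_{L_q(Ω;X)}^q)/2 for all f, g ∈ L_q(Ω;X). -/
open MeasureTheory

def UniformlyConvexPow (X : Type*) [NormedAddCommGroup X] [NormedSpace ℝ X]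
    (q δ : ℝ) : Prop :=
  ∀ x y : X, ‖(2 : ℝ)⁻¹ • (x + y)‖ ^ q + δ * ‖(2 : ℝ)⁻¹ • (x - y)‖ ^ q ≤
    (‖x‖ ^ q + ‖y‖ ^ q) / 2

/-!
The defining inequality has the same exponent `q` on every norm, so for `f, g ∈ L_q(Ω; X)`
it holds pointwise for `f ω, g ω` and integrates to itself: `‖h‖^q = ∫ ‖h ω‖^q dμ` turns each
term of the pointwise inequality into the corresponding term for `f, g`.
-/

namespace MeasureTheory.Lp

variable {E : Type*} [NormedAddCommGroup E] {Ω : Type*} [MeasurableSpace Ω] {μ : Measure Ω}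
  {p : ENNReal}

theorem norm_rpow_toReal_eq_integral [Fact (1 ≤ p)] (hp : p ≠ ⊤) (f : Lp E p μ) :
    ‖f‖ ^ p.toReal = ∫ ω, ‖f ω‖ ^ p.toReal ∂μ := by
  have hp_pos : 0 < p.toReal := ENNReal.toReal_pos (one_pos.trans_le Fact.out).ne' hp
  have hint_nonneg : 0 ≤ ∫ ω, ‖f ω‖ ^ p.toReal ∂μ :=
    integral_nonneg fun ω => Real.rpow_nonneg (norm_nonneg _) _
  rw [Lp.norm_def, (Lp.memLp f).eLpNorm_eq_integral_rpow_norm (one_pos.trans_le Fact.out).ne' hp,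
    ENNReal.toReal_ofReal (Real.rpow_nonneg hint_nonneg _), ← Real.rpow_mul hint_nonneg,
    inv_mul_cancel₀ hp_pos.ne', Real.rpow_one]

variable [NormedSpace ℝ E]

theorem coeFn_midpoint_add_sub (f g : Lp E p μ) :
    ∀ᵐ ω ∂μ, ((2 : ℝ)⁻¹ • (f + g) : Lp E p μ) ω = (2 : ℝ)⁻¹ • (f ω + g ω) ∧
      ((2 : ℝ)⁻¹ • (f - g) : Lp E p μ) ω = (2 : ℝ)⁻¹ • (f ω - g ω) := by
  filter_upwards [Lp.coeFn_smul (2 : ℝ)⁻¹ (f + g), Lp.coeFn_smul (2 : ℝ)⁻¹ (f - g),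
    Lp.coeFn_add f g, Lp.coeFn_sub f g] with ω h_add h_sub hf_add hf_sub
  simp only [h_add, h_sub, Pi.smul_apply, hf_add, hf_sub, Pi.add_apply, Pi.sub_apply, and_self]

theorem uniformlyConvexPow [Fact (1 ≤ p)] (hp : p ≠ ⊤) {δ : ℝ}
    (hE : UniformlyConvexPow E p.toReal δ) :
    UniformlyConvexPow (Lp E p μ) p.toReal δ := by
  intro f g
  have hint (h : Lp E p μ) : Integrable (fun ω => ‖h ω‖ ^ p.toReal) μ :=
    (Lp.memLp h).integrable_norm_rpow (one_pos.trans_le Fact.out).ne' hp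
  have h_pointwise : ∀ᵐ ω ∂μ, ‖((2 : ℝ)⁻¹ • (f + g) : Lp E p μ) ω‖ ^ p.toReal
      + δ * ‖((2 : ℝ)⁻¹ • (f - g) : Lp E p μ) ω‖ ^ p.toReal
      ≤ (‖f ω‖ ^ p.toReal + ‖g ω‖ ^ p.toReal) / 2 := by
    filter_upwards [coeFn_midpoint_add_sub f g] with ω ⟨h_add, h_sub⟩
    rw [h_add, h_sub]
    exact hE (f ω) (g ω)
  simp only [norm_rpow_toReal_eq_integral hp]
  calc ∫ ω, ‖((2 : ℝ)⁻¹ • (f + g) : Lp E p μ) ω‖ ^ p.toReal ∂μ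
        + δ * ∫ ω, ‖((2 : ℝ)⁻¹ • (f - g) : Lp E p μ) ω‖ ^ p.toReal ∂μ
      = ∫ ω, (‖((2 : ℝ)⁻¹ • (f + g) : Lp E p μ) ω‖ ^ p.toReal
          + δ * ‖((2 : ℝ)⁻¹ • (f - g) : Lp E p μ) ω‖ ^ p.toReal) ∂μ := by
        rw [integral_add (hint _) ((hint _).const_mul δ), integral_const_mul]
    _ ≤ ∫ ω, (‖f ω‖ ^ p.toReal + ‖g ω‖ ^ p.toReal) / 2 ∂μ :=
        integral_mono_ae ((hint _).add ((hint _).const_mul δ))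
          (((hint f).add (hint g)).div_const 2) h_pointwise
    _ = (∫ ω, ‖f ω‖ ^ p.toReal ∂μ + ∫ ω, ‖g ω‖ ^ p.toReal ∂μ) / 2 := by
        rw [integral_div, integral_add (hint f) (hint g)]

end MeasureTheory.Lp

theorem stmt7_general (X : Type*) [NormedAddCommGroup X] [NormedSpace ℝ X]
    (q δ : ℝ)
    (hX : UniformlyConvexPow X q δ)
    (Ω : Type*) [MeasurableSpace Ω] (μ : Measure Ω)
    [Fact (1 ≤ ENNReal.ofReal q)] :
    UniformlyConvexPow (Lp X (ENNReal.ofReal q) μ) q δ := by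
  have hq : 0 ≤ q := zero_le_one.trans (ENNReal.one_le_ofReal.mp Fact.out)
  have h := Lp.uniformlyConvexPow (μ := μ) ENNReal.ofReal_ne_top
    (by rwa [ENNReal.toReal_ofReal hq] : UniformlyConvexPow X (ENNReal.ofReal q).toReal δ)
  rwa [ENNReal.toReal_ofReal hq] at h

/-- If `X` is uniformly convex of power type `q` (`2 ≤ q < ∞`) with constant
`δ ∈ (0,1]`, then so is the Bochner space `L_q(Ω; X)`, with the same constant. -/
theorem stmt7 (X : Type*) [NormedAddCommGroup X] [NormedSpace ℝ X] [CompleteSpace X]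
    (q δ : ℝ) (hq : 2 ≤ q) (hδ : δ ∈ Set.Ioc (0 : ℝ) 1)
    (hX : UniformlyConvexPow X q δ)
    (Ω : Type*) [MeasurableSpace Ω] (μ : Measure Ω)
    [Fact (1 ≤ ENNReal.ofReal q)] :
    UniformlyConvexPow (Lp X (ENNReal.ofReal q) μ) q δ :=
  stmt7_general X q δ hX Ω μ
end

section
/- Let 2 ≤ q < ∞ and let X be a Banach space which is uniformly convex of power type q with constant δ ∈ (0,1]. Let (Ω̃,Ã,μ̃) be a probability space and let 𝒜, ℬ ⊆ Ã be sub-σ-algebras. Define the operator T on the Bochner space L_q(Ω̃,𝒜,μ̃;X) by Tf = 𝔼[ 𝔼[f | ℬ] | 𝒜 ], the iterated conditional expectation. Then ‖I − T‖ ≤ 2 − ε as an operator on L_q(Ω̃,𝒜,μ̃;X), where ε := (2δ/(1+2δ))·(1/q). -/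
/-!
Let `P, Q` be contractive projections with `P f = f`, and put `g = Q f`, `h = P g`. Then
`‖g‖ ≤ ‖(f + g)/2‖` because `g = Q ((f + g)/2)`, `‖f - h‖ = ‖P (f - g)‖ ≤ ‖f - g‖`, and
`‖f - h‖ ≤ ‖f‖ + ‖g‖`. Uniform convexity of power type `q` turns the first bound into
`‖g‖^q + 2δ ‖(f - g)/2‖^q ≤ ‖f‖^q`, so `‖g‖` and `‖(f - g)/2‖` cannot both be close to `‖f‖`;
Bernoulli's inequality quantifies this as `‖f - h‖ ≤ (2 - ε) ‖f‖`. Conditional expectations are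
contractive projections on `L_q(X)`, and `L_q(X)` is uniformly convex of power type `q` with the
same constant as `X`, by integrating the defining inequality pointwise.
-/

open MeasureTheory

open scoped ENNReal

lemma le_two_sub_mul_of_rpow_add_le {q δ a b e n : ℝ} (hq : 1 ≤ q) (hδ : 0 ≤ δ) (ha : 0 ≤ a)
    (h : b ^ q + 2 * δ * e ^ q ≤ a ^ q) (hne : n ≤ 2 * e) (hnab : n ≤ a + b) :
    n ≤ (2 - 2 * δ / (1 + 2 * δ) * (1 / q)) * a := by
  set ε := 2 * δ / (1 + 2 * δ) * (1 / q)
  have hqε : q * ε = 2 * δ / (1 + 2 * δ) := by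
    simp only [ε]; field_simp
  have hqε_le : q * ε * (1 + δ) ≤ 2 * δ := by
    rw [hqε, div_mul_eq_mul_div, div_le_iff₀ (by positivity)]; nlinarith
  have hε0 : 0 ≤ ε := by positivity
  have hε1 : ε ≤ 1 := by
    have : 2 * δ / (1 + 2 * δ) ≤ 1 := by rw [div_le_one (by positivity)]; linarith
    nlinarith
  -- Otherwise `b > (1 - ε) a` and `e > (1 - ε/2) a`; by Bernoulli's inequality this forces
  -- `b^q + 2δ e^q > (1 + 2δ - q ε (1 + δ)) a^q ≥ a^q`.
  by_contra! hn
  have hb : ((1 - ε) * a) ^ q < b ^ q :=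
    Real.rpow_lt_rpow (by nlinarith) (by linarith) (by linarith)
  have he : ((1 - ε / 2) * a) ^ q < e ^ q :=
    Real.rpow_lt_rpow (by nlinarith) (by linarith) (by linarith)
  rw [Real.mul_rpow (by linarith) ha] at hb he
  have hbε : 1 - q * ε ≤ (1 - ε) ^ q := by
    simpa [sub_eq_add_neg] using one_add_mul_self_le_rpow_one_add (by linarith : -1 ≤ -ε) hq
  have heε : 1 - q * ε / 2 ≤ (1 - ε / 2) ^ q := by
    simpa [sub_eq_add_neg, mul_div_assoc] using
      one_add_mul_self_le_rpow_one_add (by linarith : -1 ≤ -(ε / 2)) hq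
  have haq : 0 ≤ a ^ q := Real.rpow_nonneg ha q
  nlinarith [mul_le_mul_of_nonneg_right hbε haq, mul_le_mul_of_nonneg_right heε haq,
    mul_le_mul_of_nonneg_right hqε_le haq]

theorem UniformlyConvexPow.norm_sub_le_two_sub_mul {E : Type*} [NormedAddCommGroup E]
    [NormedSpace ℝ E] {q δ : ℝ} (hE : UniformlyConvexPow E q δ) (hq : 1 ≤ q) (hδ : 0 ≤ δ)
    {f g h : E} (hg : ‖g‖ ≤ ‖(2 : ℝ)⁻¹ • (f + g)‖) (hfh : ‖f - h‖ ≤ ‖f - g‖)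
    (hh : ‖h‖ ≤ ‖g‖) :
    ‖f - h‖ ≤ (2 - 2 * δ / (1 + 2 * δ) * (1 / q)) * ‖f‖ := by
  have hfg : ‖f - g‖ = 2 * ‖(2 : ℝ)⁻¹ • (f - g)‖ := by
    rw [norm_smul, ← mul_assoc]; norm_num
  have hconv : ‖g‖ ^ q + 2 * δ * ‖(2 : ℝ)⁻¹ • (f - g)‖ ^ q ≤ ‖f‖ ^ q := by
    have := Real.rpow_le_rpow (norm_nonneg _) hg (by linarith : 0 ≤ q)
    linarith [hE f g]
  refine le_two_sub_mul_of_rpow_add_le hq hδ (norm_nonneg f) hconv (hfg ▸ hfh) ?_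
  exact (norm_sub_le f h).trans (by linarith)

section LpSpace

variable {X Ω : Type*} [NormedAddCommGroup X] {m0 : MeasurableSpace Ω}
  {μ : Measure Ω} {p : ℝ≥0∞}

theorem MeasureTheory.Lp.norm_rpow_toReal_eq_integral_s9 (hp0 : p ≠ 0) (hp : p ≠ ∞)
    (F : Lp X p μ) : ‖F‖ ^ p.toReal = ∫ ω, ‖F ω‖ ^ p.toReal ∂μ := by
  rw [Lp.norm_def, toReal_eLpNorm (Lp.aestronglyMeasurable F),
    lpNorm_eq_integral_norm_rpow_toReal hp0 hp (Lp.aestronglyMeasurable F),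
    Real.rpow_inv_rpow (integral_nonneg fun _ => by positivity)
      (ENNReal.toReal_ne_zero.2 ⟨hp0, hp⟩)]

theorem UniformlyConvexPow.lp [NormedSpace ℝ X] [Fact (1 ≤ p)] {δ : ℝ} (hp : p ≠ ∞)
    (hX : UniformlyConvexPow X p.toReal δ) :
    UniformlyConvexPow (Lp X p μ) p.toReal δ := by
  have hp0 : p ≠ 0 := (zero_lt_one.trans_le Fact.out).ne'
  have hint (F : Lp X p μ) : Integrable (fun ω => ‖F ω‖ ^ p.toReal) μ :=
    (Lp.memLp F).integrable_norm_rpow hp0 hp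
  intro F G
  simp only [Lp.norm_rpow_toReal_eq_integral_s9 hp0 hp]
  rw [← integral_const_mul, ← integral_add (hint _) ((hint _).const_mul δ),
    ← integral_add (hint F) (hint G), ← integral_div]
  refine integral_mono_ae ((hint _).add ((hint _).const_mul δ))
    (((hint F).add (hint G)).div_const 2) ?_
  filter_upwards [Lp.coeFn_smul (2 : ℝ)⁻¹ (F + G), Lp.coeFn_smul (2 : ℝ)⁻¹ (F - G),
    Lp.coeFn_add F G, Lp.coeFn_sub F G] with ω hsmul_add hsmul_sub hadd hsub
  simp only [Pi.smul_apply, Pi.add_apply, Pi.sub_apply] at hsmul_add hsmul_sub hadd hsub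
  rw [hsmul_add, hsmul_sub, hadd, hsub]
  exact hX (F ω) (G ω)

theorem MeasureTheory.MemLp.norm_toLp_le_of_ae_eq_condExp [NormedSpace ℝ X] [CompleteSpace X]
    {m : MeasurableSpace Ω} (hp : 1 ≤ p) {ψ φ : Ω → X} (hψ : MemLp ψ p μ) (hφ : MemLp φ p μ)
    (hψφ : ψ =ᵐ[μ] μ[φ|m]) : ‖hψ.toLp ψ‖ ≤ ‖hφ.toLp φ‖ := by
  rw [Lp.norm_toLp, Lp.norm_toLp]
  exact ENNReal.toReal_mono hφ.2.ne
    ((eLpNorm_congr_ae hψφ).trans_le (eLpNorm_condExp_le_eLpNorm φ hp))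

end LpSpace

section CondExp

variable {Ω E : Type*} [NormedAddCommGroup E] [NormedSpace ℝ E] [CompleteSpace E]
  {m m0 : MeasurableSpace Ω} {μ : Measure Ω} {f g : Ω → E}

theorem condExp_midpoint_condExp_ae_eq (hm : m ≤ m0) [SigmaFinite (μ.trim hm)]
    (hf : Integrable f μ) : μ[(2 : ℝ)⁻¹ • (f + μ[f|m])|m] =ᵐ[μ] μ[f|m] := by
  have hidem : μ[μ[f|m]|m] = μ[f|m] :=
    condExp_of_stronglyMeasurable hm stronglyMeasurable_condExp integrable_condExp
  filter_upwards [condExp_smul (m := m) (μ := μ) (2 : ℝ)⁻¹ (f + μ[f|m]),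
    condExp_add (m := m) hf integrable_condExp] with ω hsmul hadd
  rw [hsmul, Pi.smul_apply, hadd, Pi.add_apply, hidem, ← two_smul ℝ, smul_smul]
  norm_num

theorem condExp_sub_ae_eq_of_aestronglyMeasurable (hm : m ≤ m0) [SigmaFinite (μ.trim hm)]
    (hfm : AEStronglyMeasurable[m] f μ) (hf : Integrable f μ) (hg : Integrable g μ) :
    μ[f - g|m] =ᵐ[μ] f - μ[g|m] := by
  filter_upwards [condExp_sub (m := m) hf hg,
    condExp_of_aestronglyMeasurable' hm hfm hf] with ω hsub hfω
  simp only [Pi.sub_apply] at hsub ⊢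
  rw [hsub, hfω]

end CondExp

/-- If `X` is uniformly convex of power type `q` with constant `δ ∈ (0,1]`,
`(Ω̃, μ̃)` is a probability space with sub-σ-algebras `𝒜, ℬ`, and
`T f = 𝔼[𝔼[f|ℬ]|𝒜]` is the iterated conditional expectation, then
`‖I - T‖ ≤ 2 - ε` on the `𝒜`-measurable part of `L_q(Ω̃; X)`, i.e.
`‖f - T f‖_{L_q} ≤ (2 - ε) ‖f‖_{L_q}` with `ε = (2δ/(1+2δ)) · (1/q)`. -/
theorem stmt9 (X : Type*) [NormedAddCommGroup X] [NormedSpace ℝ X] [CompleteSpace X]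
    (q δ : ℝ) (hq : 2 ≤ q) (hδ : δ ∈ Set.Ioc (0 : ℝ) 1)
    (hX : UniformlyConvexPow X q δ)
    (Ω : Type*) [m0 : MeasurableSpace Ω] (μ : Measure Ω) [IsProbabilityMeasure μ]
    (mA mB : MeasurableSpace Ω) (hmA : mA ≤ m0) (hmB : mB ≤ m0)
    (f : Ω → X) (hf : MemLp f (ENNReal.ofReal q) μ)
    (hfA : AEStronglyMeasurable[mA] f μ) :
    eLpNorm (f - μ[μ[f|mB]|mA]) (ENNReal.ofReal q) μ ≤
      ENNReal.ofReal (2 - 2 * δ / (1 + 2 * δ) * (1 / q)) *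
        eLpNorm f (ENNReal.ofReal q) μ := by
  set p := ENNReal.ofReal q
  have hpq : p.toReal = q := ENNReal.toReal_ofReal (by linarith)
  have hp : 1 ≤ p := by simpa [p] using (by linarith : (1 : ℝ) ≤ q)
  have : Fact (1 ≤ p) := ⟨hp⟩
  have hLp : UniformlyConvexPow (Lp X p μ) q δ :=
    hpq ▸ UniformlyConvexPow.lp ENNReal.ofReal_ne_top (hpq ▸ hX)
  set g := μ[f|mB]
  have hg : MemLp g p μ := hf.condExp hp
  have hh : MemLp μ[g|mA] p μ := hg.condExp hp
  have key := hLp.norm_sub_le_two_sub_mul (by linarith) hδ.1.le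
    (f := hf.toLp f) (g := hg.toLp g) (h := hh.toLp _) ?_ ?_ ?_
  · rw [← MemLp.toLp_sub] at key
    rw [← Lp.enorm_toLp (hf.sub hh), ← Lp.enorm_toLp hf, ← ofReal_norm, ← ofReal_norm,
      ← ENNReal.ofReal_mul' (norm_nonneg _)]
    exact ENNReal.ofReal_le_ofReal key
  · rw [← MemLp.toLp_add, ← MemLp.toLp_const_smul]
    exact hg.norm_toLp_le_of_ae_eq_condExp hp _
      (condExp_midpoint_condExp_ae_eq hmB (hf.integrable hp)).symm
  · rw [← MemLp.toLp_sub, ← MemLp.toLp_sub]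
    exact MemLp.norm_toLp_le_of_ae_eq_condExp hp _ _
      (condExp_sub_ae_eq_of_aestronglyMeasurable hmA hfA (hf.integrable hp)
        (hg.integrable hp)).symm
  · exact hh.norm_toLp_le_of_ae_eq_condExp hp hg .rfl
end
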